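/- arXiv:2312.03573 — 3 statements merged into one kernel-verified Lean document; each statement's English description precedes it below -/
import Mathlib

section
/- Let Ξ ⊆ ℝ^p be nonempty, convex and closed, let ξ^{(1)},…,ξ^{(K)} ∈ Ξ with empirical distribution P̂_K = (1/K) Σ_{k=1}^K δ_{ξ^{(k)}}, and let ε ≥ 0. Let h : Ξ → ℝ satisfy h(ξ) = max_{ℓ=1,…,L} h_ℓ(ξ), where each −h_ℓ is a convex, proper, lower semicontinuous function on Ξ and each h_ℓ is not identically −∞ on Ξ. Then the worst-case expectation over the Wasserstein ambiguity set equals its dual: sup_{Q ∈ B_ε(P̂_K)} ∫_Ξ h(ξ) dQ(ξ) = inf_{λ ≥ 0} [ λ·ε + (1/K) Σ_{k=1}^K sup_{ξ ∈ Ξ} ( h(ξ) − λ·‖ξ − ξ^{(k)}‖ ) ], with both sides taking values in ℝ ∪ {+∞}. Consequently, for a game in which agent i minimizes x_i ↦ sup_{Q ∈ B_{ε_i}(P̂_{K_i})} E_Q[h_i(x_i, x_{-i}, ξ_i)] over X_i with h_i(x, ·) of the above form for each x, one has inf_{x_i ∈ X_i} sup_{Q ∈ B_{ε_i}(P̂_{K_i})}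 E_Q[h_i(x_i, x_{-i}, ξ_i)] = inf_{x_i ∈ X_i, λ_i ≥ 0} [ λ_i ε_i + (1/K_i) Σ_{k=1}^{K_i} sup_{ξ_i ∈ Ξ_i} ( h_i(x_i, x_{-i}, ξ_i) − λ_i ‖ξ_i − ξ_i^{(k)}‖ ) ]. -/
/-!
Weak duality: couple the empirical distribution with a distribution `Q` of the ball at transport
cost close to `ε`. On `Ξ`, `h ξ ≤ σ_k + λ ‖ξ - ξ_k‖` with `σ_k = sup_{ξ ∈ Ξ} (h ξ - λ ‖ξ - ξ_k‖)`,
and integrating this against the coupling bounds `E_Q h` by the dual objective at `λ`.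

Strong duality for `ε > 0`: moving the mass `1 / K` of each sample `ξ_k` according to an arbitrary
probability measure on `Ξ` gives a convex set of pairs (transport cost, expected value) in `ℝ²`,
and every pair of cost at most `ε` is attained by a distribution of the ball. If `c` exceeds the
primal value, this set misses the open quadrant `{cost < ε, value > c}`; a separating line gives a
multiplier `λ ≥ 0`, and testing it on Dirac plans, one sample at a time, shows that the dual
objective at `λ` is at most `c`.

For `ε = 0` the empirical mean is a lower bound for the primal value, and the dual objective tends
to it as `λ → ∞`: each concave upper semicontinuous piece of `h` is bounded above by an affine
function, hence grows at most linearly, and is upper semicontinuous at the samples.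
-/

open MeasureTheory

/-- The order-1 Wasserstein distance between two measures, defined as the infimum over
couplings of the expected distance. -/
noncomputable def wassersteinDist {E : Type*} [MeasurableSpace E] [PseudoEMetricSpace E]
    (μ ν : Measure E) : ℝ :=
  (⨅ (γ : Measure (E × E)) (_ : γ.map Prod.fst = μ) (_ : γ.map Prod.snd = ν),
    ∫⁻ z, edist z.1 z.2 ∂γ).toReal

/-- The empirical distribution of `K` samples. -/
noncomputable def empiricalMeasure {E : Type*} [MeasurableSpace E] {K : ℕ}
    (ξs : Fin K → E) : Measure E :=
  (K : ENNReal)⁻¹ • ∑ k : Fin K, Measure.dirac (ξs k)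

/-- The Wasserstein ambiguity set of radius `ε` around the empirical distribution. -/
noncomputable def ambiguitySet {p : ℕ} (Ξ : Set (EuclideanSpace ℝ (Fin p))) {K : ℕ}
    (ξs : Fin K → EuclideanSpace ℝ (Fin p)) (ε : ℝ) :
    Set (Measure (EuclideanSpace ℝ (Fin p))) :=
  {Q | IsProbabilityMeasure Q ∧ Q Ξᶜ = 0 ∧ Integrable (fun x => ‖x‖) Q ∧
       wassersteinDist (empiricalMeasure ξs) Q ≤ ε}

/-- Worst-case expectation of `h` over the Wasserstein ambiguity set, with values in
`ℝ ∪ {±∞}` (it equals `−∞` if no distribution in the set gives a well-defined finite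
expectation). -/
noncomputable def drWorst {p : ℕ} (Ξ : Set (EuclideanSpace ℝ (Fin p))) {K : ℕ}
    (ξs : Fin K → EuclideanSpace ℝ (Fin p)) (ε : ℝ)
    (h : EuclideanSpace ℝ (Fin p) → ℝ) : EReal :=
  sSup {r : EReal | ∃ Q ∈ ambiguitySet Ξ ξs ε, Integrable h Q ∧
    r = ((∫ ξ, h ξ ∂Q : ℝ) : EReal)}

/-- The dual objective `λ·ε + (1/K) Σ_k sup_{ξ ∈ Ξ} ( h(ξ) − λ‖ξ − ξ^{(k)}‖ )`,
with values in `ℝ ∪ {+∞}`. -/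
noncomputable def drDualBody {p : ℕ} (Ξ : Set (EuclideanSpace ℝ (Fin p))) {K : ℕ}
    (ξs : Fin K → EuclideanSpace ℝ (Fin p)) (ε lam : ℝ)
    (h : EuclideanSpace ℝ (Fin p) → ℝ) : EReal :=
  ((lam * ε : ℝ) : EReal) + (((K : ℝ)⁻¹ : ℝ) : EReal) *
    ∑ k : Fin K, sSup {s : EReal | ∃ ξ ∈ Ξ, s = ((h ξ - lam * ‖ξ - ξs k‖ : ℝ) : EReal)}

/-- `h` is the pointwise maximum of `L` functions `hl ℓ` on `Ξ`, each of which is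
concave (`−hl ℓ` convex) and upper semicontinuous (`−hl ℓ` lower semicontinuous) on `Ξ`. -/
def IsPointwiseMaxOfConcave {p L : ℕ} (Ξ : Set (EuclideanSpace ℝ (Fin p)))
    (h : EuclideanSpace ℝ (Fin p) → ℝ)
    (hl : Fin L → EuclideanSpace ℝ (Fin p) → ℝ) : Prop :=
  (∀ ξ ∈ Ξ, h ξ = ⨆ ℓ : Fin L, hl ℓ ξ) ∧
    (∀ ℓ, ConvexOn ℝ Ξ fun ξ => -(hl ℓ ξ)) ∧
    (∀ ℓ, LowerSemicontinuousOn (fun ξ => -(hl ℓ ξ)) Ξ)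

open Filter Set

lemma EReal.coe_finsetSum {ι : Type*} (s : Finset ι) (f : ι → ℝ) :
    ((∑ i ∈ s, f i : ℝ) : EReal) = ∑ i ∈ s, (f i : EReal) :=
  map_sum (⟨⟨((↑) : ℝ → EReal), EReal.coe_zero⟩, EReal.coe_add⟩ : ℝ →+ EReal) f s

lemma EReal.finsetSum_eq_top {ι : Type*} {s : Finset ι} {f : ι → EReal} {a : ι} (ha : a ∈ s)
    (htop : f a = ⊤) (hbot : ∀ i ∈ s, f i ≠ ⊥) : ∑ i ∈ s, f i = ⊤ := by
  classical
  have hrest : ((∑ i ∈ s.erase a, (f i).toReal : ℝ) : EReal) ≤ ∑ i ∈ s.erase a, f i := by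
    rw [EReal.coe_finsetSum]
    exact Finset.sum_le_sum fun i hi => EReal.coe_toReal_le (hbot i (Finset.mem_of_mem_erase hi))
  rw [← Finset.add_sum_erase s f ha, htop]
  exact EReal.top_add_of_ne_bot (ne_bot_of_le_ne_bot (EReal.coe_ne_bot _) hrest)

lemma Finset.sum_sSup_le_of_forall_sum_le {ι α : Type*} (s : Finset ι) {Ξ : Set α}
    (hΞ : Ξ.Nonempty) (φ : ι → α → ℝ) {C : ℝ}
    (hC : ∀ v : ι → α, (∀ i, v i ∈ Ξ) → ∑ i ∈ s, φ i (v i) ≤ C) :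
    ∑ i ∈ s, sSup {x : EReal | ∃ ξ ∈ Ξ, x = φ i ξ} ≤ C := by
  classical
  induction s using Finset.induction_on generalizing C with
  | empty =>
    obtain ⟨ξ, hξ⟩ := hΞ
    simpa using hC (fun _ => ξ) fun _ => hξ
  | insert a s ha ih =>
    have hsub : ∀ x y : EReal, x ≤ C - y ↔ x + y ≤ C := fun _ _ =>
      EReal.le_sub_iff_add_le (.inr (EReal.coe_ne_bot C)) (.inr (EReal.coe_ne_top C))
    rw [Finset.sum_insert ha, ← hsub]
    refine sSup_le ?_
    rintro _ ⟨ξ, hξ, rfl⟩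
    rw [hsub, add_comm, ← hsub, ← EReal.coe_sub]
    refine ih fun v hv => ?_
    have := hC (Function.update v a ξ) fun i => by
      rcases eq_or_ne i a with rfl | hi
      · simpa using hξ
      · simpa [Function.update_of_ne hi] using hv i
    rw [Finset.sum_insert ha, Function.update_self, Finset.sum_congr rfl fun i hi =>
      congrArg (φ i) (Function.update_of_ne (ne_of_mem_of_not_mem hi ha) ξ v)] at this
    linarith

lemma sInf_exists_eq_of_eq_sInf {α β : Type*} [CompleteLattice α] {X : Set β} {f : β → α}
    {S : β → Set α} (hf : ∀ x ∈ X, f x = sInf (S x)) :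
    sInf {r | ∃ x ∈ X, r = f x} = sInf {r | ∃ x ∈ X, r ∈ S x} := by
  refine le_antisymm (le_sInf ?_) (le_sInf ?_)
  · rintro r ⟨x, hx, hr⟩
    calc sInf {r | ∃ x ∈ X, r = f x} ≤ f x := sInf_le ⟨x, hx, rfl⟩
      _ ≤ r := hf x hx ▸ sInf_le hr
  · rintro r ⟨x, hx, rfl⟩
    rw [hf x hx]
    exact le_sInf fun s hs => sInf_le ⟨x, hx, hs⟩

lemma nonpos_of_forall_pos_mul_lt {a b : ℝ} (h : ∀ s : ℝ, 0 < s → a * s < b) : a ≤ 0 := by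
  by_contra! ha
  have := h ((|b| + 1) / a) (by positivity)
  rw [mul_div_cancel₀ _ ha.ne'] at this
  linarith [le_abs_self b]

/-- Lagrange multiplier for maximizing `q.2` over a convex set subject to `q.1 ≤ ε`, under the
Slater condition `q₀.1 < ε`. -/
lemma Convex.exists_lagrange_multiplier {B : Set (ℝ × ℝ)} (hB : Convex ℝ B) {ε c : ℝ}
    {q₀ : ℝ × ℝ} (hq₀ : q₀ ∈ B) (hslater : q₀.1 < ε) (hle : ∀ q ∈ B, q.1 < ε → q.2 ≤ c) :
    ∃ lam : ℝ, 0 ≤ lam ∧ ∀ q ∈ B, q.2 - lam * q.1 ≤ c - lam * ε := by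
  have hdisj : Disjoint (Iio ε ×ˢ Ioi c) B :=
    disjoint_left.2 fun q hqU hqB => (hle q hqB hqU.1).not_gt hqU.2
  obtain ⟨f, u, hfU, hfB⟩ := geometric_hahn_banach_open ((convex_Iio ε).prod (convex_Ioi c))
    (isOpen_Iio.prod isOpen_Ioi) hB hdisj
  set α := f (1, 0)
  set β := f (0, 1)
  have hf : ∀ x y : ℝ, f (x, y) = α * x + β * y := fun x y => by
    rw [show ((x, y) : ℝ × ℝ) = x • ((1 : ℝ), (0 : ℝ)) + y • ((0 : ℝ), (1 : ℝ)) by simp,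
      map_add, map_smul, map_smul, smul_eq_mul, smul_eq_mul, mul_comm x, mul_comm y]
  have hU : ∀ x < ε, ∀ y > c, α * x + β * y < u := fun x hx y hy => hf x y ▸ hfU _ ⟨hx, hy⟩
  have hcorner : α * ε + β * c ≤ u := by
    have hmem : (ε, c) ∈ closure (Iio ε ×ˢ Ioi c) := by
      rw [closure_prod_eq, closure_Iio, closure_Ioi]
      exact mk_mem_prod (mem_Iic.2 le_rfl) (mem_Ici.2 le_rfl)
    have : f (ε, c) ≤ u := closure_minimal (t := {q | f q ≤ u}) (fun q hq => (hfU q hq).le)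
      (isClosed_le f.continuous continuous_const) hmem
    rwa [hf] at this
  have hα : 0 ≤ α := by
    have := nonpos_of_forall_pos_mul_lt (a := -α) (b := u - α * ε - β * (c + 1)) fun s hs => by
      linarith [hU (ε - s) (by linarith) (c + 1) (by linarith)]
    linarith
  have hβ : β < 0 := by
    refine lt_of_le_of_ne (nonpos_of_forall_pos_mul_lt (b := u - α * (ε - 1) - β * c)
      fun t ht => by linarith [hU (ε - 1) (by linarith) (c + t) (by linarith)]) fun hβ0 => ?_
    -- for `β = 0` the separating line is vertical and the Slater point is on the wrong side
    have h1 := hU q₀.1 hslater (c + 1) (by linarith)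
    have h2 := hf q₀.1 q₀.2 ▸ hfB q₀ hq₀
    rw [hβ0] at h1 h2
    linarith
  refine ⟨α / -β, div_nonneg hα (by linarith), fun q hq => ?_⟩
  have hq := (hf q.1 q.2 ▸ hfB q hq : u ≤ α * q.1 + β * q.2)
  have hαβ : α = α / -β * -β := (div_mul_cancel₀ α (by linarith)).symm
  refine le_of_mul_le_mul_left (a := -β) ?_ (by linarith)
  rw [hαβ] at hcorner hq
  linarith

lemma ConvexOn.exists_sub_mul_norm_sub_le {E : Type*} [NormedAddCommGroup E] [NormedSpace ℝ E]
    {Ξ : Set E} {f : E → ℝ} (hf : ConvexOn ℝ Ξ f) (hlsc : LowerSemicontinuousOn f Ξ)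
    (hcl : IsClosed Ξ) {x : E} (hx : x ∈ Ξ) :
    ∃ M Λ : ℝ, ∀ ξ ∈ Ξ, M - Λ * ‖ξ - x‖ ≤ f ξ := by
  obtain ⟨l, c, hlc, -⟩ := hf.exists_affine_le_of_lt (𝕜 := ℝ) hx (sub_one_lt (f x)) hcl hlsc
  refine ⟨l x + c, ‖l‖, fun ξ hξ => ?_⟩
  have hξ' : l ξ + c ≤ f ξ := by simpa using hlc ⟨ξ, hξ⟩
  have hl : l x - l ξ ≤ ‖l‖ * ‖ξ - x‖ := by
    rw [← map_sub, norm_sub_rev]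
    exact (le_abs_self _).trans (l.le_opNorm _)
  linarith

lemma eventually_forall_sub_mul_norm_sub_le {E : Type*} [SeminormedAddCommGroup E] {Ξ : Set E}
    {g : E → ℝ} {x : E} {M Λ : ℝ} (hgrowth : ∀ ξ ∈ Ξ, g ξ ≤ M + Λ * ‖ξ - x‖)
    (husc : UpperSemicontinuousWithinAt g Ξ x) {δ : ℝ} (hδ : 0 < δ) :
    ∀ᶠ lam in atTop, ∀ ξ ∈ Ξ, g ξ - lam * ‖ξ - x‖ ≤ g x + δ := by
  obtain ⟨r, hr, hball⟩ := Metric.mem_nhdsWithin_iff.1 (husc (g x + δ) (by linarith))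
  filter_upwards [eventually_ge_atTop 0, eventually_ge_atTop Λ,
    eventually_ge_atTop (Λ + (M - g x) / r)] with lam hlam₀ hlamΛ hlam ξ hξ
  by_cases hnear : ‖ξ - x‖ < r
  · have : g ξ < g x + δ := hball ⟨by rwa [Metric.mem_ball, dist_eq_norm], hξ⟩
    nlinarith [norm_nonneg (ξ - x)]
  · have hfar : M - g x ≤ (lam - Λ) * r := by
      rw [← div_le_iff₀ hr]
      linarith
    nlinarith [hgrowth ξ hξ, mul_le_mul_of_nonneg_left (not_lt.1 hnear) (sub_nonneg.2 hlamΛ)]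

section AvgMeasure

variable {α : Type*} [MeasurableSpace α] {K : ℕ}

noncomputable def avgMeasure (ν : Fin K → Measure α) : Measure α :=
  (K : ENNReal)⁻¹ • ∑ k, ν k

lemma empiricalMeasure_eq_avgMeasure (ξs : Fin K → α) :
    empiricalMeasure ξs = avgMeasure fun k => Measure.dirac (ξs k) := rfl

lemma avgMeasure_apply (ν : Fin K → Measure α) (s : Set α) :
    avgMeasure ν s = (K : ENNReal)⁻¹ * ∑ k, ν k s := by
  rw [avgMeasure, Measure.smul_apply, Measure.finsetSum_apply, smul_eq_mul]

lemma isProbabilityMeasure_avgMeasure (hK : 0 < K) {ν : Fin K → Measure α}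
    (hν : ∀ k, IsProbabilityMeasure (ν k)) : IsProbabilityMeasure (avgMeasure ν) := by
  refine ⟨?_⟩
  simp only [avgMeasure_apply, measure_univ, Finset.sum_const, Finset.card_univ, Fintype.card_fin,
    nsmul_eq_mul, mul_one]
  exact ENNReal.inv_mul_cancel (by exact_mod_cast hK.ne') (ENNReal.natCast_ne_top K)

lemma ae_avgMeasure {ν : Fin K → Measure α} {P : α → Prop} (hP : ∀ k, ∀ᵐ x ∂ν k, P x) :
    ∀ᵐ x ∂avgMeasure ν, P x := by
  simp only [ae_iff] at hP ⊢
  simp [avgMeasure_apply, hP]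

lemma lintegral_avgMeasure (ν : Fin K → Measure α) (f : α → ENNReal) :
    ∫⁻ x, f x ∂avgMeasure ν = (K : ENNReal)⁻¹ * ∑ k, ∫⁻ x, f x ∂ν k := by
  rw [avgMeasure, lintegral_smul_measure, lintegral_finsetSum_measure, smul_eq_mul]

lemma integrable_avgMeasure (hK : 0 < K) {ν : Fin K → Measure α} {G : Type*}
    [NormedAddCommGroup G] {f : α → G} (hf : ∀ k, Integrable f (ν k)) :
    Integrable f (avgMeasure ν) :=
  (integrable_finsetSum_measure.2 fun k _ => hf k).smul_measure
    (ENNReal.inv_ne_top.2 (by exact_mod_cast hK.ne'))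

lemma integral_avgMeasure {ν : Fin K → Measure α} {f : α → ℝ} (hf : ∀ k, Integrable f (ν k)) :
    ∫ x, f x ∂avgMeasure ν = (K : ℝ)⁻¹ * ∑ k, ∫ x, f x ∂ν k := by
  rw [avgMeasure, integral_smul_measure, integral_finsetSum_measure fun k _ => hf k,
    ENNReal.toReal_inv, ENNReal.toReal_natCast, smul_eq_mul]

lemma map_avgMeasure {β : Type*} [MeasurableSpace β] (ν : Fin K → Measure α) {f : α → β}
    (hf : Measurable f) : (avgMeasure ν).map f = avgMeasure fun k => (ν k).map f := by
  ext s hs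
  simp only [Measure.map_apply hf hs, avgMeasure_apply]

lemma integral_ofReal_smul_add_ofReal_smul {μ ν : Measure α} {f : α → ℝ} (hμ : Integrable f μ)
    (hν : Integrable f ν) {a b : ℝ} (ha : 0 ≤ a) (hb : 0 ≤ b) :
    ∫ x, f x ∂(ENNReal.ofReal a • μ + ENNReal.ofReal b • ν) =
      a * ∫ x, f x ∂μ + b * ∫ x, f x ∂ν := by
  rw [integral_add_measure (hμ.smul_measure ENNReal.ofReal_ne_top)
    (hν.smul_measure ENNReal.ofReal_ne_top), integral_smul_measure, integral_smul_measure,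
    ENNReal.toReal_ofReal ha, ENNReal.toReal_ofReal hb, smul_eq_mul, smul_eq_mul]

variable [MeasurableSingletonClass α]

lemma ae_empiricalMeasure (ξs : Fin K → α) {P : α → Prop} (hP : ∀ k, P (ξs k)) :
    ∀ᵐ x ∂empiricalMeasure ξs, P x :=
  ae_avgMeasure fun k => by rw [ae_dirac_eq]; exact hP k

lemma integrable_empiricalMeasure (hK : 0 < K) (ξs : Fin K → α) {G : Type*}
    [NormedAddCommGroup G] (f : α → G) : Integrable f (empiricalMeasure ξs) :=
  integrable_avgMeasure hK fun _ => integrable_dirac enorm_lt_top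

lemma integral_empiricalMeasure (ξs : Fin K → α) (f : α → ℝ) :
    ∫ x, f x ∂empiricalMeasure ξs = (K : ℝ)⁻¹ * ∑ k, f (ξs k) := by
  rw [empiricalMeasure_eq_avgMeasure, integral_avgMeasure fun k => integrable_dirac enorm_lt_top]
  simp only [integral_dirac]

end AvgMeasure

section Wasserstein

variable {E : Type*} [MeasurableSpace E]

lemma wassersteinDist_le_of_coupling [PseudoEMetricSpace E] {μ ν : Measure E}
    (γ : Measure (E × E)) (hγ₁ : γ.map Prod.fst = μ) (hγ₂ : γ.map Prod.snd = ν) {c : ℝ}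
    (hc : 0 ≤ c) (hcost : ∫⁻ z, edist z.1 z.2 ∂γ ≤ ENNReal.ofReal c) :
    wassersteinDist μ ν ≤ c :=
  ENNReal.toReal_le_of_le_ofReal hc ((iInf₂_le γ hγ₁).trans (iInf_le_of_le hγ₂ hcost))

lemma exists_coupling_integral_dist_lt [NormedAddCommGroup E] [BorelSpace E]
    [SecondCountableTopology E] {μ ν : Measure E} [IsProbabilityMeasure μ]
    [IsProbabilityMeasure ν] (hμ : Integrable (fun x => ‖x‖) μ) (hν : Integrable (fun x => ‖x‖) ν)
    {r : ℝ} (hr : wassersteinDist μ ν < r) :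
    ∃ γ : Measure (E × E), γ.map Prod.fst = μ ∧ γ.map Prod.snd = ν ∧
      Integrable (fun z => dist z.1 z.2) γ ∧ ∫ z, dist z.1 z.2 ∂γ < r := by
  have hdist : Measurable fun z : E × E => dist z.1 z.2 := measurable_fst.dist measurable_snd
  have hprod : Integrable (fun z : E × E => dist z.1 z.2) (μ.prod ν) :=
    ((hμ.comp_fst ν).add (hν.comp_snd μ)).mono' hdist.aestronglyMeasurable
      (ae_of_all _ fun z => by
        rw [Real.norm_eq_abs, abs_of_nonneg dist_nonneg, dist_eq_norm]
        exact norm_sub_le _ _)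
  have hfin : ∫⁻ z, edist z.1 z.2 ∂(μ.prod ν) ≠ ⊤ := by
    simpa only [edist_dist] using hprod.lintegral_lt_top.ne
  have hI : (⨅ (γ : Measure (E × E)) (_ : γ.map Prod.fst = μ) (_ : γ.map Prod.snd = ν),
      ∫⁻ z, edist z.1 z.2 ∂γ) ≠ ⊤ :=
    ne_top_of_le_ne_top hfin ((iInf₂_le (μ.prod ν) (by simp)).trans (iInf_le _ (by simp)))
  have hlt := (ENNReal.lt_ofReal_iff_toReal_lt hI).2 hr
  simp only [iInf_lt_iff] at hlt
  obtain ⟨γ, hγ₁, hγ₂, hcost⟩ := hlt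
  have hint : Integrable (fun z => dist z.1 z.2) γ :=
    ⟨hdist.aestronglyMeasurable, by
      simpa only [HasFiniteIntegral, Real.enorm_of_nonneg dist_nonneg, ← edist_dist] using
        hcost.trans ENNReal.ofReal_lt_top⟩
  refine ⟨γ, hγ₁, hγ₂, hint, ?_⟩
  rw [← ENNReal.ofReal_lt_ofReal_iff_of_nonneg (integral_nonneg fun _ => dist_nonneg),
    ofReal_integral_eq_lintegral_ofReal hint (ae_of_all _ fun _ => dist_nonneg)]
  simpa only [← edist_dist] using hcost

lemma lintegral_edist_map_prodMk [NormedAddCommGroup E] [BorelSpace E]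
    [SecondCountableTopology E] {ν : Measure E} (a : E) (hν : Integrable (fun x => ‖x - a‖) ν) :
    ∫⁻ z, edist z.1 z.2 ∂ν.map (Prod.mk a) = ENNReal.ofReal (∫ x, ‖x - a‖ ∂ν) := by
  rw [lintegral_map (measurable_fst.edist measurable_snd) measurable_prodMk_left,
    ofReal_integral_eq_lintegral_ofReal hν (ae_of_all _ fun _ => norm_nonneg _)]
  simp [edist_dist, dist_eq_norm, norm_sub_rev]

end Wasserstein

section PenalizedSup

variable {E : Type*} [SeminormedAddCommGroup E]

noncomputable def penalizedSup (Ξ : Set E) (h : E → ℝ) (lam : ℝ) (x : E) : EReal :=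
  sSup {s : EReal | ∃ ξ ∈ Ξ, s = ((h ξ - lam * ‖ξ - x‖ : ℝ) : EReal)}

variable {Ξ : Set E} {h : E → ℝ} {lam : ℝ} {x ξ : E}

lemma le_penalizedSup (hξ : ξ ∈ Ξ) :
    ((h ξ - lam * ‖ξ - x‖ : ℝ) : EReal) ≤ penalizedSup Ξ h lam x :=
  le_sSup ⟨ξ, hξ, rfl⟩

lemma penalizedSup_ne_bot (hξ : ξ ∈ Ξ) : penalizedSup Ξ h lam x ≠ ⊥ :=
  ne_bot_of_le_ne_bot (EReal.coe_ne_bot _) (le_penalizedSup hξ)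

lemma le_toReal_penalizedSup (htop : penalizedSup Ξ h lam x ≠ ⊤) (hξ : ξ ∈ Ξ) :
    h ξ - lam * ‖ξ - x‖ ≤ (penalizedSup Ξ h lam x).toReal := by
  rw [← EReal.coe_le_coe_iff, EReal.coe_toReal htop (penalizedSup_ne_bot hξ)]
  exact le_penalizedSup hξ

lemma penalizedSup_le {C : ℝ} (hC : ∀ ξ ∈ Ξ, h ξ - lam * ‖ξ - x‖ ≤ C) :
    penalizedSup Ξ h lam x ≤ C :=
  sSup_le fun _ ⟨ξ, hξ, hs⟩ => hs ▸ EReal.coe_le_coe_iff.2 (hC ξ hξ)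

end PenalizedSup

section WeakDuality

variable {E : Type*} [NormedAddCommGroup E] [MeasurableSpace E] [MeasurableSingletonClass E]
  {K : ℕ}

lemma integral_le_of_coupling (hK : 0 < K) {Ξ : Set E} {ξs : Fin K → E} {Q : Measure E}
    {γ : Measure (E × E)} (hγ₁ : γ.map Prod.fst = empiricalMeasure ξs)
    (hγ₂ : γ.map Prod.snd = Q) (hQ : Q Ξᶜ = 0) {h : E → ℝ} (hint : Integrable h Q)
    (hdist : Integrable (fun z => dist z.1 z.2) γ) {lam : ℝ} {φ : E → ℝ}
    (hφ : ∀ k, ∀ ξ ∈ Ξ, h ξ - lam * ‖ξ - ξs k‖ ≤ φ (ξs k)) :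
    ∫ ξ, h ξ ∂Q ≤ (K : ℝ)⁻¹ * ∑ k, φ (ξs k) + lam * ∫ z, dist z.1 z.2 ∂γ := by
  have hφint : Integrable φ (γ.map Prod.fst) := hγ₁ ▸ integrable_empiricalMeasure hK ξs φ
  have hhint : Integrable h (γ.map Prod.snd) := hγ₂ ▸ hint
  have hφ₁ : Integrable (fun z : E × E => φ z.1) γ := hφint.comp_measurable measurable_fst
  have hbound : ∀ᵐ z ∂γ, h z.2 ≤ φ z.1 + lam * dist z.1 z.2 := by
    have h₁ := ae_of_ae_map measurable_fst.aemeasurable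
      (hγ₁ ▸ ae_empiricalMeasure ξs (P := (· ∈ range ξs)) mem_range_self)
    have h₂ := ae_of_ae_map measurable_snd.aemeasurable (hγ₂ ▸ measure_eq_zero_iff_ae_notMem.1 hQ)
    filter_upwards [h₁, h₂] with z ⟨k, hk⟩ hz
    have := hφ k z.2 (not_not.1 hz)
    rw [← hk, dist_comm, dist_eq_norm]
    linarith
  calc ∫ ξ, h ξ ∂Q = ∫ z, h z.2 ∂γ := by
        rw [← hγ₂, integral_map measurable_snd.aemeasurable hhint.1]
    _ ≤ ∫ z, (φ z.1 + lam * dist z.1 z.2) ∂γ :=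
        integral_mono_ae (hhint.comp_measurable measurable_snd) (hφ₁.add (hdist.const_mul lam))
          hbound
    _ = (K : ℝ)⁻¹ * ∑ k, φ (ξs k) + lam * ∫ z, dist z.1 z.2 ∂γ := by
        rw [integral_add hφ₁ (hdist.const_mul lam),
          integral_const_mul, ← integral_empiricalMeasure ξs φ, ← hγ₁,
          integral_map measurable_fst.aemeasurable hφint.1]

end WeakDuality

section CostValue

variable {E : Type*} [NormedAddCommGroup E] [MeasurableSpace E] {K : ℕ}

structure IsAdmissibleMeasure (Ξ : Set E) (h : E → ℝ) (ν : Measure E) : Prop where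
  isProbabilityMeasure : IsProbabilityMeasure ν
  measure_compl : ν Ξᶜ = 0
  integrable_norm : Integrable (fun x => ‖x‖) ν
  integrable : Integrable h ν

/-- Transport costs and expected values of the transport plans moving the mass `1 / K` of each
sample `ξs k` according to an admissible measure. -/
def costValueSet (Ξ : Set E) (ξs : Fin K → E) (h : E → ℝ) : Set (ℝ × ℝ) :=
  {q | ∃ ν : Fin K → Measure E, (∀ k, IsAdmissibleMeasure Ξ h (ν k)) ∧
    q = ((K : ℝ)⁻¹ * ∑ k, ∫ x, ‖x - ξs k‖ ∂ν k, (K : ℝ)⁻¹ * ∑ k, ∫ x, h x ∂ν k)}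

variable {Ξ : Set E} {h : E → ℝ}

lemma IsAdmissibleMeasure.integrable_norm_sub [BorelSpace E] {ν : Measure E}
    (hν : IsAdmissibleMeasure Ξ h ν) (a : E) : Integrable (fun x => ‖x - a‖) ν :=
  haveI := hν.isProbabilityMeasure
  (hν.integrable_norm.add (integrable_const ‖a‖)).mono'
    (continuous_id.sub continuous_const).norm.aestronglyMeasurable
    (ae_of_all _ fun x => by simpa using norm_sub_le x a)

lemma isAdmissibleMeasure_dirac [MeasurableSingletonClass E] {ξ : E} (hξ : ξ ∈ Ξ) :
    IsAdmissibleMeasure Ξ h (Measure.dirac ξ) :=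
  ⟨inferInstance, by simp [Measure.dirac_apply, hξ], integrable_dirac enorm_lt_top,
    integrable_dirac enorm_lt_top⟩

lemma IsAdmissibleMeasure.ofReal_smul_add_ofReal_smul {μ ν : Measure E}
    (hμ : IsAdmissibleMeasure Ξ h μ) (hν : IsAdmissibleMeasure Ξ h ν) {a b : ℝ} (ha : 0 ≤ a)
    (hb : 0 ≤ b) (hab : a + b = 1) :
    IsAdmissibleMeasure Ξ h (ENNReal.ofReal a • μ + ENNReal.ofReal b • ν) := by
  obtain ⟨hμ₁, hμ₂, hμ₃, hμ₄⟩ := hμ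
  obtain ⟨hν₁, hν₂, hν₃, hν₄⟩ := hν
  refine ⟨⟨?_⟩, by simp [hμ₂, hν₂], ?_, ?_⟩
  · simp [← ENNReal.ofReal_add ha hb, hab]
  · exact (hμ₃.smul_measure ENNReal.ofReal_ne_top).add_measure
      (hν₃.smul_measure ENNReal.ofReal_ne_top)
  · exact (hμ₄.smul_measure ENNReal.ofReal_ne_top).add_measure
      (hν₄.smul_measure ENNReal.ofReal_ne_top)

lemma convex_costValueSet [BorelSpace E] (ξs : Fin K → E) : Convex ℝ (costValueSet Ξ ξs h) := by
  rintro _ ⟨ν, hν, rfl⟩ _ ⟨ν', hν', rfl⟩ a b ha hb hab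
  refine ⟨fun k => ENNReal.ofReal a • ν k + ENNReal.ofReal b • ν' k,
    fun k => (hν k).ofReal_smul_add_ofReal_smul (hν' k) ha hb hab, ?_⟩
  have hcost := fun k => integral_ofReal_smul_add_ofReal_smul ((hν k).integrable_norm_sub (ξs k))
    ((hν' k).integrable_norm_sub (ξs k)) ha hb
  have hval := fun k =>
    integral_ofReal_smul_add_ofReal_smul (hν k).integrable (hν' k).integrable ha hb
  simp only [hcost, hval, Prod.smul_mk, Prod.mk_add_mk, smul_eq_mul, Finset.sum_add_distrib,
    ← Finset.mul_sum]
  congr 1 <;> ring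

lemma costValue_dirac_mem_costValueSet [MeasurableSingletonClass E] (ξs : Fin K → E)
    {ξv : Fin K → E} (hξv : ∀ k, ξv k ∈ Ξ) :
    ((K : ℝ)⁻¹ * ∑ k, ‖ξv k - ξs k‖, (K : ℝ)⁻¹ * ∑ k, h (ξv k)) ∈ costValueSet Ξ ξs h :=
  ⟨fun k => Measure.dirac (ξv k), fun k => isAdmissibleMeasure_dirac (hξv k), by
    simp only [integral_dirac]⟩

end CostValue

section DistributionallyRobust

variable {p K L : ℕ} {Ξ : Set (EuclideanSpace ℝ (Fin p))} {ξs : Fin K → EuclideanSpace ℝ (Fin p)}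
  {ε lam : ℝ} {h : EuclideanSpace ℝ (Fin p) → ℝ}

lemma drDualBody_eq : drDualBody Ξ ξs ε lam h =
    ((lam * ε : ℝ) : EReal) + (((K : ℝ)⁻¹ : ℝ) : EReal) * ∑ k, penalizedSup Ξ h lam (ξs k) :=
  rfl

lemma drDualBody_le_of_sum_le {S : ℝ} (hS : ∑ k, penalizedSup Ξ h lam (ξs k) ≤ S) :
    drDualBody Ξ ξs ε lam h ≤ ((lam * ε + (K : ℝ)⁻¹ * S : ℝ) : EReal) := by
  rw [drDualBody_eq, EReal.coe_add, EReal.coe_mul (K : ℝ)⁻¹]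
  gcongr

lemma avgMeasure_mem_ambiguitySet (hK : 0 < K) {ν : Fin K → Measure (EuclideanSpace ℝ (Fin p))}
    (hν : ∀ k, IsAdmissibleMeasure Ξ h (ν k))
    (hcost : (K : ℝ)⁻¹ * ∑ k, ∫ x, ‖x - ξs k‖ ∂ν k ≤ ε) :
    avgMeasure ν ∈ ambiguitySet Ξ ξs ε := by
  have hprob := fun k => (hν k).isProbabilityMeasure
  refine ⟨isProbabilityMeasure_avgMeasure hK hprob,
    by simp [avgMeasure_apply, (hν _).measure_compl],
    integrable_avgMeasure hK fun k => (hν k).integrable_norm, ?_⟩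
  have hcost₀ : 0 ≤ (K : ℝ)⁻¹ * ∑ k, ∫ x, ‖x - ξs k‖ ∂ν k :=
    mul_nonneg (inv_nonneg.2 (Nat.cast_nonneg K))
      (Finset.sum_nonneg fun k _ => integral_nonneg fun _ => norm_nonneg _)
  refine wassersteinDist_le_of_coupling (avgMeasure fun k => (ν k).map (Prod.mk (ξs k))) ?_ ?_
    (hcost₀.trans hcost) ?_
  · rw [map_avgMeasure _ measurable_fst, empiricalMeasure_eq_avgMeasure]
    congr 1
    funext k
    rw [Measure.map_map measurable_fst measurable_prodMk_left]
    simp [Function.comp_def, Measure.map_const]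
  · rw [map_avgMeasure _ measurable_snd]
    congr 1
    funext k
    rw [Measure.map_map measurable_snd measurable_prodMk_left]
    simp [Function.comp_def]
  · rw [lintegral_avgMeasure, Finset.sum_congr rfl fun k _ =>
      lintegral_edist_map_prodMk (ξs k) ((hν k).integrable_norm_sub (ξs k)),
      ← ENNReal.ofReal_sum_of_nonneg fun k _ => integral_nonneg fun _ => norm_nonneg _,
      ← ENNReal.ofReal_natCast, ← ENNReal.ofReal_inv_of_pos (by exact_mod_cast hK),
      ← ENNReal.ofReal_mul (inv_nonneg.2 (Nat.cast_nonneg K))]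
    exact ENNReal.ofReal_le_ofReal hcost

lemma coe_le_drWorst_of_mem_costValueSet (hK : 0 < K) {q : ℝ × ℝ}
    (hq : q ∈ costValueSet Ξ ξs h) (hq₁ : q.1 ≤ ε) : (q.2 : EReal) ≤ drWorst Ξ ξs ε h := by
  obtain ⟨ν, hν, rfl⟩ := hq
  exact le_sSup ⟨avgMeasure ν, avgMeasure_mem_ambiguitySet hK hν hq₁,
    integrable_avgMeasure hK fun k => (hν k).integrable, by
      rw [integral_avgMeasure fun k => (hν k).integrable]⟩

lemma integral_le_of_mem_ambiguitySet (hK : 0 < K) {Q : Measure (EuclideanSpace ℝ (Fin p))}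
    (hQ : Q ∈ ambiguitySet Ξ ξs ε) (hint : Integrable h Q) (hlam : 0 ≤ lam)
    {φ : EuclideanSpace ℝ (Fin p) → ℝ} (hφ : ∀ k, ∀ ξ ∈ Ξ, h ξ - lam * ‖ξ - ξs k‖ ≤ φ (ξs k)) :
    ∫ ξ, h ξ ∂Q ≤ lam * ε + (K : ℝ)⁻¹ * ∑ k, φ (ξs k) := by
  obtain ⟨hQprob, hQΞ, hQnorm, hW⟩ := hQ
  have : IsProbabilityMeasure (empiricalMeasure ξs) :=
    isProbabilityMeasure_avgMeasure hK fun _ => inferInstance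
  refine le_of_forall_pos_le_add fun e he => ?_
  have hδ : 0 < e / (lam + 1) := by positivity
  obtain ⟨γ, hγ₁, hγ₂, hdist, hcost⟩ := exists_coupling_integral_dist_lt
    (integrable_empiricalMeasure hK ξs _) hQnorm (hW.trans_lt (lt_add_of_pos_right ε hδ))
  have hlamδ : lam * (e / (lam + 1)) ≤ e := by
    rw [mul_div_assoc', div_le_iff₀ (by linarith)]
    nlinarith
  have := integral_le_of_coupling hK hγ₁ hγ₂ hQΞ hint hdist hφ
  nlinarith [mul_le_mul_of_nonneg_left hcost.le hlam]

lemma coe_integral_le_drDualBody (hK : 0 < K) (hξs : ∀ k, ξs k ∈ Ξ) (hlam : 0 ≤ lam)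
    {Q : Measure (EuclideanSpace ℝ (Fin p))} (hQ : Q ∈ ambiguitySet Ξ ξs ε)
    (hint : Integrable h Q) : ((∫ ξ, h ξ ∂Q : ℝ) : EReal) ≤ drDualBody Ξ ξs ε lam h := by
  by_cases htop : ∃ k, penalizedSup Ξ h lam (ξs k) = ⊤
  · obtain ⟨k, hk⟩ := htop
    rw [drDualBody_eq, EReal.finsetSum_eq_top (Finset.mem_univ k) hk
      fun j _ => penalizedSup_ne_bot (hξs j),
      EReal.mul_top_of_pos (by exact_mod_cast inv_pos.2 (Nat.cast_pos.2 hK)), EReal.coe_add_top]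
    exact le_top
  push Not at htop
  calc ((∫ ξ, h ξ ∂Q : ℝ) : EReal)
      ≤ ((lam * ε + (K : ℝ)⁻¹ * ∑ k, (penalizedSup Ξ h lam (ξs k)).toReal : ℝ) : EReal) :=
        EReal.coe_le_coe_iff.2 (integral_le_of_mem_ambiguitySet hK hQ hint hlam
          (φ := fun x => (penalizedSup Ξ h lam x).toReal)
          fun k _ hξ => le_toReal_penalizedSup (htop k) hξ)
    _ ≤ drDualBody Ξ ξs ε lam h := by
        rw [drDualBody_eq, EReal.coe_add, EReal.coe_mul (K : ℝ)⁻¹, EReal.coe_finsetSum]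
        gcongr with k
        exact EReal.coe_toReal_le (penalizedSup_ne_bot (hξs k))

lemma drWorst_le_drDualBody (hK : 0 < K) (hξs : ∀ k, ξs k ∈ Ξ) (hlam : 0 ≤ lam) :
    drWorst Ξ ξs ε h ≤ drDualBody Ξ ξs ε lam h :=
  sSup_le fun _ ⟨_, hQ, hint, hr⟩ => hr ▸ coe_integral_le_drDualBody hK hξs hlam hQ hint

lemma IsPointwiseMaxOfConcave.eventually_forall_sub_mul_norm_sub_le
    {hl : Fin L → EuclideanSpace ℝ (Fin p) → ℝ} (hstruct : IsPointwiseMaxOfConcave Ξ h hl)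
    (hL : 0 < L) (hcl : IsClosed Ξ) {x : EuclideanSpace ℝ (Fin p)} (hx : x ∈ Ξ) {δ : ℝ}
    (hδ : 0 < δ) : ∀ᶠ lam in atTop, ∀ ξ ∈ Ξ, h ξ - lam * ‖ξ - x‖ ≤ h x + δ := by
  obtain ⟨hmax, hconv, hlsc⟩ := hstruct
  have : Nonempty (Fin L) := ⟨⟨0, hL⟩⟩
  have hpiece : ∀ ℓ, ∀ᶠ lam in atTop, ∀ ξ ∈ Ξ, hl ℓ ξ - lam * ‖ξ - x‖ ≤ hl ℓ x + δ := fun ℓ => by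
    obtain ⟨M, Λ, hMΛ⟩ := (hconv ℓ).exists_sub_mul_norm_sub_le (hlsc ℓ) hcl hx
    exact _root_.eventually_forall_sub_mul_norm_sub_le (M := -M) (Λ := Λ)
      (fun ξ hξ => by linarith [hMΛ ξ hξ]) (lowerSemicontinuousWithinAt_neg_iff.1 (hlsc ℓ x hx)) hδ
  filter_upwards [eventually_all.2 hpiece] with lam hlam ξ hξ
  rw [hmax ξ hξ, hmax x hx, sub_le_iff_le_add]
  refine ciSup_le fun ℓ => ?_
  have := le_ciSup (finite_range fun ℓ => hl ℓ x).bddAbove ℓ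
  linarith [hlam ℓ ξ hξ]

lemma sInf_drDualBody_zero_le (hL : 0 < L) (hK : 0 < K) (hcl : IsClosed Ξ)
    (hξs : ∀ k, ξs k ∈ Ξ) {hl : Fin L → EuclideanSpace ℝ (Fin p) → ℝ}
    (hstruct : IsPointwiseMaxOfConcave Ξ h hl) :
    sInf {r : EReal | ∃ lam : ℝ, 0 ≤ lam ∧ r = drDualBody Ξ ξs 0 lam h} ≤
      (((K : ℝ)⁻¹ * ∑ k, h (ξs k) : ℝ) : EReal) := by
  refine EReal.le_of_forall_lt_iff_le.1 fun z hz => ?_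
  have hδ : 0 < z - (K : ℝ)⁻¹ * ∑ k, h (ξs k) := sub_pos.2 (EReal.coe_lt_coe_iff.1 hz)
  obtain ⟨lam, hlam, hbound⟩ := ((eventually_ge_atTop 0).and (eventually_all.2 fun k =>
    hstruct.eventually_forall_sub_mul_norm_sub_le hL hcl (hξs k) hδ)).exists
  refine sInf_le_of_le ⟨lam, hlam, rfl⟩ ((drDualBody_le_of_sum_le
    (S := ∑ k, (h (ξs k) + (z - (K : ℝ)⁻¹ * ∑ k, h (ξs k)))) ?_).trans_eq ?_)
  · rw [EReal.coe_finsetSum]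
    exact Finset.sum_le_sum fun k _ => penalizedSup_le (hbound k)
  · have : (K : ℝ) ≠ 0 := by exact_mod_cast hK.ne'
    rw [Finset.sum_add_distrib, Finset.sum_const, Finset.card_univ, Fintype.card_fin, nsmul_eq_mul]
    congr 1
    field_simp
    ring

lemma sInf_drDualBody_le_drWorst_of_pos (hK : 0 < K) (hξs : ∀ k, ξs k ∈ Ξ) (hε : 0 < ε) :
    sInf {r : EReal | ∃ lam : ℝ, 0 ≤ lam ∧ r = drDualBody Ξ ξs ε lam h} ≤ drWorst Ξ ξs ε h := by
  refine EReal.le_of_forall_lt_iff_le.1 fun c hc => ?_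
  have hle : ∀ q ∈ costValueSet Ξ ξs h, q.1 < ε → q.2 ≤ c := fun q hq hq₁ =>
    EReal.coe_le_coe_iff.1 ((coe_le_drWorst_of_mem_costValueSet hK hq hq₁.le).trans hc.le)
  obtain ⟨lam, hlam, hmult⟩ := (convex_costValueSet ξs).exists_lagrange_multiplier
    (costValue_dirac_mem_costValueSet ξs hξs) (by simpa using hε) hle
  have hK' : (K : ℝ) ≠ 0 := by exact_mod_cast hK.ne'
  have hsum : ∑ k, penalizedSup Ξ h lam (ξs k) ≤ ((K * (c - lam * ε) : ℝ) : EReal) :=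
    Finset.sum_sSup_le_of_forall_sum_le _ ⟨_, hξs ⟨0, hK⟩⟩ _ fun ξv hξv => by
      have := hmult _ (costValue_dirac_mem_costValueSet (h := h) ξs hξv)
      rw [Finset.sum_sub_distrib, ← Finset.mul_sum]
      field_simp at this
      linarith
  refine sInf_le_of_le ⟨lam, hlam, rfl⟩ ((drDualBody_le_of_sum_le hsum).trans_eq ?_)
  congr 1
  field_simp
  ring

theorem drWorst_eq_sInf_drDualBody (hL : 0 < L) (hK : 0 < K) (hcl : IsClosed Ξ)
    (hξs : ∀ k, ξs k ∈ Ξ) (hε : 0 ≤ ε) {hl : Fin L → EuclideanSpace ℝ (Fin p) → ℝ}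
    (hstruct : IsPointwiseMaxOfConcave Ξ h hl) :
    drWorst Ξ ξs ε h = sInf {r : EReal | ∃ lam : ℝ, 0 ≤ lam ∧ r = drDualBody Ξ ξs ε lam h} := by
  refine le_antisymm (le_sInf fun _ ⟨lam, hlam, hr⟩ => hr ▸ drWorst_le_drDualBody hK hξs hlam) ?_
  rcases hε.eq_or_lt with rfl | hε
  · exact (sInf_drDualBody_zero_le hL hK hcl hξs hstruct).trans
      (coe_le_drWorst_of_mem_costValueSet hK (costValue_dirac_mem_costValueSet ξs hξs) (by simp))
  · exact sInf_drDualBody_le_drWorst_of_pos hK hξs hε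

end DistributionallyRobust

theorem dr_strong_duality_general {p L K : ℕ} (hL : 0 < L) (hK : 0 < K)
    (Ξ : Set (EuclideanSpace ℝ (Fin p)))
    (hcl : IsClosed Ξ)
    (ξs : Fin K → EuclideanSpace ℝ (Fin p)) (hξs : ∀ k, ξs k ∈ Ξ)
    (ε : ℝ) (hε : 0 ≤ ε)
    (h : EuclideanSpace ℝ (Fin p) → ℝ)
    (hl : Fin L → EuclideanSpace ℝ (Fin p) → ℝ)
    (hstruct : IsPointwiseMaxOfConcave Ξ h hl) :
    -- primal worst-case expectation equals the dual value
    (drWorst Ξ ξs ε h =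
        sInf {r : EReal | ∃ lam : ℝ, 0 ≤ lam ∧ r = drDualBody Ξ ξs ε lam h}) ∧
      -- consequently, for a game cost `H x ξ` of the above form for each decision `x`,
      -- the agent's best distributionally robust value admits the dual reformulation
      (∀ {n : ℕ} (Xi : Set (EuclideanSpace ℝ (Fin n)))
          (H : EuclideanSpace ℝ (Fin n) → EuclideanSpace ℝ (Fin p) → ℝ)
          (Hl : EuclideanSpace ℝ (Fin n) → Fin L → EuclideanSpace ℝ (Fin p) → ℝ),
        (∀ x ∈ Xi, IsPointwiseMaxOfConcave Ξ (H x) (Hl x)) →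
        sInf {r : EReal | ∃ x ∈ Xi, r = drWorst Ξ ξs ε (H x)} =
          sInf {r : EReal | ∃ x ∈ Xi, ∃ lam : ℝ, 0 ≤ lam ∧
            r = drDualBody Ξ ξs ε lam (H x)}) :=
  ⟨drWorst_eq_sInf_drDualBody hL hK hcl hξs hε hstruct, fun _ _ _ hH =>
    sInf_exists_eq_of_eq_sInf fun x hx => drWorst_eq_sInf_drDualBody hL hK hcl hξs hε (hH x hx)⟩

/-- strong duality for the Wasserstein distributionally robust
expectation, and its consequence for the distributionally robust game. -/
theorem dr_strong_duality {p L K : ℕ} (hL : 0 < L) (hK : 0 < K)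
    (Ξ : Set (EuclideanSpace ℝ (Fin p)))
    (hne : Ξ.Nonempty) (hconv : Convex ℝ Ξ) (hcl : IsClosed Ξ)
    (ξs : Fin K → EuclideanSpace ℝ (Fin p)) (hξs : ∀ k, ξs k ∈ Ξ)
    (ε : ℝ) (hε : 0 ≤ ε)
    (h : EuclideanSpace ℝ (Fin p) → ℝ)
    (hl : Fin L → EuclideanSpace ℝ (Fin p) → ℝ)
    (hstruct : IsPointwiseMaxOfConcave Ξ h hl) :
    -- primal worst-case expectation equals the dual value
    (drWorst Ξ ξs ε h =
        sInf {r : EReal | ∃ lam : ℝ, 0 ≤ lam ∧ r = drDualBody Ξ ξs ε lam h}) ∧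
      -- consequently, for a game cost `H x ξ` of the above form for each decision `x`,
      -- the agent's best distributionally robust value admits the dual reformulation
      (∀ {n : ℕ} (Xi : Set (EuclideanSpace ℝ (Fin n)))
          (H : EuclideanSpace ℝ (Fin n) → EuclideanSpace ℝ (Fin p) → ℝ)
          (Hl : EuclideanSpace ℝ (Fin n) → Fin L → EuclideanSpace ℝ (Fin p) → ℝ),
        (∀ x ∈ Xi, IsPointwiseMaxOfConcave Ξ (H x) (Hl x)) →
        sInf {r : EReal | ∃ x ∈ Xi, r = drWorst Ξ ξs ε (H x)} =
          sInf {r : EReal | ∃ x ∈ Xi, ∃ lam : ℝ, 0 ≤ lam ∧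
            r = drDualBody Ξ ξs ε lam (H x)}) :=
  dr_strong_duality_general hL hK Ξ hcl ξs hξs ε hε h hl hstruct
end

section
/- Let Ξ ⊆ ℝ^p be nonempty, convex and closed, let g : Ξ → ℝ ∪ {−∞} be such that −g is convex, proper and lower semicontinuous on Ξ and g is not identically −∞, let λ ≥ 0 and ξ̂ ∈ ℝ^p. Then, with values in ℝ ∪ {±∞}, sup_{ξ ∈ Ξ} ( g(ξ) − λ·‖ξ − ξ̂‖ ) = inf_{z ∈ ℝ^p, ‖z‖ ≤ λ} sup_{ξ ∈ Ξ} ( g(ξ) − ⟨z, ξ − ξ̂⟩ ), where ‖·‖ is the Euclidean norm (so that ‖·‖ is its own dual norm and λ‖ξ − ξ̂‖ = max_{‖z‖ ≤ λ} ⟨z, ξ − ξ̂⟩). -/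
/-!
Let `s` be any real upper bound of the left-hand side. Then the shifted hypograph
`{(ξ - ξ̂, t) | ξ ∈ Ξ, s + t ≤ g ξ}`, which is convex because `g` is concave, lies below the
convex cone `{(x, t) | λ‖x‖ < t}`. A Hahn–Banach hyperplane separating the two cannot be
vertical, so it is the graph of a linear form `⟪z, ·⟫`; lying below the cone forces `‖z‖ ≤ λ`,
and lying above the hypograph says `g ξ - ⟪z, ξ - ξ̂⟫ ≤ s` on `Ξ`. Letting `s` range over all real
upper bounds gives the nontrivial inequality, including the cases where the supremum is `±∞`;
the other one is Cauchy–Schwarz.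
-/

open RealInnerProductSpace

theorem nonpos_of_forall_pos_mul_le {a b : ℝ} (h : ∀ r > 0, r * a ≤ b) : a ≤ 0 := by
  by_contra! ha
  have := h ((|b| + 1) / a) (by positivity)
  rw [div_mul_cancel₀ _ ha.ne'] at this
  linarith [le_abs_self b]

theorem EReal.le_of_forall_ge_coe {a b : EReal} (h : ∀ s : ℝ, a ≤ s → b ≤ s) : b ≤ a := by
  by_contra! hab
  obtain ⟨s, has, hsb⟩ := EReal.exists_between_coe_real hab
  exact (h s has.le).not_gt hsb

def ERealConcaveOn {E : Type*} [AddCommGroup E] [Module ℝ E] (Ξ : Set E) (g : E → EReal) :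
    Prop :=
  ∀ ξ₁ ∈ Ξ, ∀ ξ₂ ∈ Ξ, ∀ a b : ℝ, 0 ≤ a → 0 ≤ b → a + b = 1 →
    (a : EReal) * g ξ₁ + (b : EReal) * g ξ₂ ≤ g (a • ξ₁ + b • ξ₂)

theorem ERealConcaveOn.convex_hypograph {E : Type*} [AddCommGroup E] [Module ℝ E]
    {Ξ : Set E} {g : E → EReal} (hconc : ERealConcaveOn Ξ g) (hconv : Convex ℝ Ξ) :
    Convex ℝ {q : E × ℝ | q.1 ∈ Ξ ∧ (q.2 : EReal) ≤ g q.1} := by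
  rintro ⟨ξ₁, t₁⟩ ⟨hξ₁, ht₁⟩ ⟨ξ₂, t₂⟩ ⟨hξ₂, ht₂⟩ a b ha hb hab
  refine ⟨hconv hξ₁ hξ₂ ha hb hab, ?_⟩
  calc ((a * t₁ + b * t₂ : ℝ) : EReal) = (a : EReal) * t₁ + (b : EReal) * t₂ := by norm_cast
    _ ≤ (a : EReal) * g ξ₁ + (b : EReal) * g ξ₂ := by gcongr
    _ ≤ g (a • ξ₁ + b • ξ₂) := hconc ξ₁ hξ₁ ξ₂ hξ₂ a b ha hb hab

section InnerProductSpace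

variable {E : Type*} [NormedAddCommGroup E] [InnerProductSpace ℝ E]

theorem real_inner_le_mul_norm_of_norm_le {z : E} {L : ℝ} (hz : ‖z‖ ≤ L) (x : E) :
    ⟪z, x⟫ ≤ L * ‖x‖ :=
  (real_inner_le_norm z x).trans (mul_le_mul_of_nonneg_right hz (norm_nonneg x))

theorem norm_le_of_forall_inner_le_add_mul_norm {y : E} {u L : ℝ} (hL : 0 ≤ L)
    (h : ∀ x, ⟪y, x⟫ ≤ u + L * ‖x‖) : ‖y‖ ≤ L := by
  have hscaled : ‖y‖ * (‖y‖ - L) ≤ 0 := by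
    refine nonpos_of_forall_pos_mul_le (b := u) fun r hr => ?_
    have := h (r • y)
    rw [real_inner_smul_right, real_inner_self_eq_norm_sq, norm_smul, Real.norm_of_nonneg hr.le]
      at this
    linarith
  rcases (norm_nonneg y).eq_or_lt with hy | hy
  · rw [← hy]; exact hL
  · nlinarith

theorem ContinuousLinearMap.exists_eq_inner_add_mul [CompleteSpace E]
    (f : StrongDual ℝ (E × ℝ)) : ∃ (y : E) (c : ℝ), ∀ x t, f (x, t) = ⟪y, x⟫ + c * t := by
  refine ⟨(InnerProductSpace.toDual ℝ E).symm (f.comp (ContinuousLinearMap.inl ℝ E ℝ)),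
    f (0, 1), fun x t => ?_⟩
  have hxt : (x, t) = ContinuousLinearMap.inl ℝ E ℝ x + t • ((0 : E), (1 : ℝ)) := by simp
  rw [InnerProductSpace.toDual_symm_apply, hxt, map_add, map_smul, smul_eq_mul, mul_comm]
  rfl

theorem convex_strictEpigraph_mul_norm {L : ℝ} (hL : 0 ≤ L) :
    Convex ℝ {q : E × ℝ | L * ‖q.1‖ < q.2} := by
  simpa using ((convexOn_norm convex_univ).smul (E := E) hL).convex_strict_epigraph

theorem exists_norm_le_forall_le_inner_of_le_mul_norm [CompleteSpace E] {L : ℝ} (hL : 0 ≤ L)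
    {K : Set (E × ℝ)} (hK : Convex ℝ K) (hKle : ∀ q ∈ K, q.2 ≤ L * ‖q.1‖) :
    ∃ z : E, ‖z‖ ≤ L ∧ ∀ q ∈ K, q.2 ≤ ⟪z, q.1⟫ := by
  rcases K.eq_empty_or_nonempty with rfl | ⟨q₀, hq₀⟩
  · exact ⟨0, by simpa using hL, by simp⟩
  have hdisj : Disjoint {q : E × ℝ | L * ‖q.1‖ < q.2} K :=
    Set.disjoint_left.2 fun q hqU hqK => (hKle q hqK).not_gt hqU
  obtain ⟨f, u, hfU, hfK⟩ := geometric_hahn_banach_open (convex_strictEpigraph_mul_norm hL)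
    (isOpen_lt (by fun_prop) continuous_snd) hK hdisj
  obtain ⟨y, c, hf⟩ := f.exists_eq_inner_add_mul
  have hU : ∀ x t, L * ‖x‖ < t → ⟪y, x⟫ + c * t < u := fun x t h => hf x t ▸ hfU (x, t) h
  have hK' : ∀ q ∈ K, u ≤ ⟪y, q.1⟫ + c * q.2 := fun q hq => hf q.1 q.2 ▸ hfK q hq
  -- a vertical hyperplane cannot separate `q₀ ∈ K` from the point of the cone straight above it
  have hc : c < 0 := by
    have := hU q₀.1 (L * ‖q₀.1‖ + 1) (by linarith)
    nlinarith [hK' q₀ hq₀, hKle q₀ hq₀]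
  have hcone : ∀ x, ⟪y, x⟫ ≤ u + -c * L * ‖x‖ := fun x =>
    le_of_forall_pos_lt_add fun ε hε => by
      have := hU x (L * ‖x‖ + ε / -c) (by have := div_pos hε (neg_pos.2 hc); linarith)
      have hcε : c * (ε / -c) = -ε := by field_simp [hc.ne]
      linarith
  have hy : ‖y‖ ≤ -c * L := norm_le_of_forall_inner_le_add_mul_norm (by nlinarith) hcone
  have hu : 0 ≤ u := by simpa using hcone 0
  refine ⟨(-c)⁻¹ • y, ?_, fun q hq => ?_⟩
  · rwa [norm_smul, norm_inv, Real.norm_of_nonneg (neg_nonneg.2 hc.le),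
      inv_mul_le_iff₀ (neg_pos.2 hc)]
  · rw [real_inner_smul_left, le_inv_mul_iff₀ (neg_pos.2 hc)]
    linarith [hK' q hq]

theorem exists_norm_le_forall_sub_inner_le [CompleteSpace E] {Ξ : Set E} {g : E → EReal}
    (hconv : Convex ℝ Ξ) (hconc : ERealConcaveOn Ξ g) {lam : ℝ} (hlam : 0 ≤ lam) (ξhat : E)
    {s : ℝ} (hs : ∀ ξ ∈ Ξ, g ξ - ((lam * ‖ξ - ξhat‖ : ℝ) : EReal) ≤ s) :
    ∃ z : E, ‖z‖ ≤ lam ∧ ∀ ξ ∈ Ξ, g ξ - ((⟪z, ξ - ξhat⟫ : ℝ) : EReal) ≤ s := by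
  set K := (fun q => (ξhat, s) + q) ⁻¹' {q : E × ℝ | q.1 ∈ Ξ ∧ (q.2 : EReal) ≤ g q.1}
  have mem_K : ∀ ξ ∈ Ξ, ∀ r : ℝ, (r : EReal) ≤ g ξ → (ξ - ξhat, r - s) ∈ K := fun ξ hξ r hr => by
    simpa only [K, Set.mem_preimage, Prod.mk_add_mk, add_sub_cancel, Set.mem_ofPred_eq] using
      And.intro hξ hr
  have K_le : ∀ q ∈ K, q.2 ≤ lam * ‖q.1‖ := fun q hqK => by
    obtain ⟨hq, hgq⟩ : ξhat + q.1 ∈ Ξ ∧ ((s + q.2 : ℝ) : EReal) ≤ g (ξhat + q.1) := hqK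
    have := (EReal.sub_le_sub hgq le_rfl).trans (hs _ hq)
    rw [← EReal.coe_sub, EReal.coe_le_coe_iff, add_sub_cancel_left] at this
    linarith
  obtain ⟨z, hz, hzK⟩ := exists_norm_le_forall_le_inner_of_le_mul_norm hlam
    ((hconc.convex_hypograph hconv).translate_preimage_right (ξhat, s)) K_le
  refine ⟨z, hz, fun ξ hξ => ?_⟩
  cases hg : g ξ using EReal.rec with
  | bot => exact bot_le
  | top =>
    have := hs ξ hξ
    rw [hg, EReal.top_sub_coe] at this
    exact absurd this (EReal.coe_lt_top s).not_ge
  | coe r =>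
    have : r - s ≤ ⟪z, ξ - ξhat⟫ := hzK _ (mem_K ξ hξ r hg.ge)
    rw [← EReal.coe_sub, EReal.coe_le_coe_iff]
    linarith

end InnerProductSpace

theorem min_sup_exchange_general {p : ℕ}
    (Ξ : Set (EuclideanSpace ℝ (Fin p)))
    (hconv : Convex ℝ Ξ)
    (g : EuclideanSpace ℝ (Fin p) → EReal)
    -- −g is convex on Ξ, i.e. g is concave on Ξ
    (hconc : ∀ ξ₁ ∈ Ξ, ∀ ξ₂ ∈ Ξ, ∀ a b : ℝ, 0 ≤ a → 0 ≤ b → a + b = 1 →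
      (a : EReal) * g ξ₁ + (b : EReal) * g ξ₂ ≤ g (a • ξ₁ + b • ξ₂))
    (lam : ℝ) (hlam : 0 ≤ lam) (ξhat : EuclideanSpace ℝ (Fin p)) :
    sSup {r : EReal | ∃ ξ ∈ Ξ, r = g ξ - ((lam * ‖ξ - ξhat‖ : ℝ) : EReal)} =
      sInf {r : EReal | ∃ z : EuclideanSpace ℝ (Fin p), ‖z‖ ≤ lam ∧
        r = sSup {s : EReal | ∃ ξ ∈ Ξ, s = g ξ - ((⟪z, ξ - ξhat⟫ : ℝ) : EReal)}} := by
  refine le_antisymm (le_sInf ?_) (EReal.le_of_forall_ge_coe fun s hs => ?_)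
  · rintro _ ⟨z, hz, rfl⟩
    refine sSup_le fun _ ⟨ξ, hξ, hr⟩ => hr ▸ le_sSup_of_le ⟨ξ, hξ, rfl⟩ ?_
    exact EReal.sub_le_sub le_rfl
      (EReal.coe_le_coe_iff.2 (real_inner_le_mul_norm_of_norm_le hz _))
  · obtain ⟨z, hz, hzs⟩ := exists_norm_le_forall_sub_inner_le hconv hconc hlam ξhat
      fun ξ hξ => hs.trans' (le_sSup ⟨ξ, hξ, rfl⟩)
    exact sInf_le_of_le ⟨z, hz, rfl⟩ (sSup_le fun _ ⟨ξ, hξ, hr⟩ => hr ▸ hzs ξ hξ)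

/-- min–sup exchange for the dualized Wasserstein cost. For a
nonempty, convex and closed set `Ξ ⊆ ℝ^p`, a concave, proper, upper semicontinuous
function `g : Ξ → ℝ ∪ {−∞}` (i.e. `−g` is convex, proper and lower semicontinuous),
`λ ≥ 0` and a point `ξ̂`, one has, with values in `ℝ ∪ {±∞}`,
`sup_{ξ ∈ Ξ} (g(ξ) − λ‖ξ − ξ̂‖) = inf_{‖z‖ ≤ λ} sup_{ξ ∈ Ξ} (g(ξ) − ⟨z, ξ − ξ̂⟩)`. -/
theorem min_sup_exchange {p : ℕ}
    (Ξ : Set (EuclideanSpace ℝ (Fin p)))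
    (hne : Ξ.Nonempty) (hconv : Convex ℝ Ξ) (hcl : IsClosed Ξ)
    (g : EuclideanSpace ℝ (Fin p) → EReal)
    -- g takes values in ℝ ∪ {−∞}
    (hgtop : ∀ ξ, g ξ ≠ ⊤)
    -- −g is proper: g is not identically −∞ on Ξ
    (hproper : ∃ ξ ∈ Ξ, g ξ ≠ ⊥)
    -- −g is convex on Ξ, i.e. g is concave on Ξ
    (hconc : ∀ ξ₁ ∈ Ξ, ∀ ξ₂ ∈ Ξ, ∀ a b : ℝ, 0 ≤ a → 0 ≤ b → a + b = 1 →
      (a : EReal) * g ξ₁ + (b : EReal) * g ξ₂ ≤ g (a • ξ₁ + b • ξ₂))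
    -- −g is lower semicontinuous on Ξ
    (hlsc : LowerSemicontinuousOn (fun ξ => -(g ξ)) Ξ)
    (lam : ℝ) (hlam : 0 ≤ lam) (ξhat : EuclideanSpace ℝ (Fin p)) :
    sSup {r : EReal | ∃ ξ ∈ Ξ, r = g ξ - ((lam * ‖ξ - ξhat‖ : ℝ) : EReal)} =
      sInf {r : EReal | ∃ z : EuclideanSpace ℝ (Fin p), ‖z‖ ≤ lam ∧
        r = sSup {s : EReal | ∃ ξ ∈ Ξ, s = g ξ - ((⟪z, ξ - ξhat⟫ : ℝ) : EReal)}} :=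
  min_sup_exchange_general Ξ hconv g hconc lam hlam ξhat
end

section
/- Let Ξ = {ξ ∈ ℝ^p : Cξ ≤ d} be a nonempty polytope, where C ∈ ℝ^{m×p} and d ∈ ℝ^m, let a ∈ ℝ^p, b ∈ ℝ, λ ≥ 0, s ∈ ℝ, and let ξ̂ ∈ Ξ be a sample point. Then sup_{ξ ∈ Ξ} ( aᵀξ + b − λ·‖ξ − ξ̂‖ ) ≤ s if and only if there exists γ ∈ ℝ^m with γ ≥ 0 (componentwise) such that b + aᵀξ̂ + γᵀ(d − Cξ̂) ≤ s and ‖Cᵀγ − a‖ ≤ λ, where ‖·‖ denotes the Euclidean norm. -/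
/-!
Weak duality is Cauchy–Schwarz: for `γ ≥ 0` and `ζ = ξ - ξhat` feasible,
`⟪a, ζ⟫ ≤ ⟪∑ γ j • C j, ζ⟫ + ‖∑ γ j • C j - a‖ ‖ζ‖ ≤ ∑ γ j (d j - ⟪C j, ξhat⟫) + λ ‖ζ‖`.

For strong duality, the dual certificate exists iff `(a, t)`, with `t = s - b - ⟪a, ξhat⟫`, lies in
`B + K`, where `B` is the ball of radius `λ` in `ℝ^p × {0}` and `K` is the cone generated by the
vectors `(C j, d j - ⟪C j, ξhat⟫)` and `(0, 1)`. Finitely generated cones are closed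
(conic Carathéodory), so otherwise a functional `(x, r) ↦ ⟪ζ, x⟫ + r ρ` separates `(a, t) + B`
from `K`. Then `ρ ≥ 0`, `⟪C j, -ζ⟫ ≤ ρ (d j - ⟪C j, ξhat⟫)` and `⟪a, -ζ⟫ - λ ‖ζ‖ > ρ t`, so
`ξhat - ζ / σ` violates the hypothesis for `σ > ρ` close enough to `ρ`.
-/

open RealInnerProductSpace Finset Filter Topology

section ConicHull

variable {ι E : Type*} [AddCommGroup E] [Module ℝ E] {v : ι → E}

lemma exists_nonneg_sum_erase_eq_of_not_linearIndepOn [DecidableEq ι] {s : Finset ι} {c : ι → ℝ}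
    (hc : ∀ i ∈ s, 0 ≤ c i) (hs : ¬LinearIndepOn ℝ v s) :
    ∃ i₀ ∈ s, ∃ c' : ι → ℝ, (∀ i ∈ s, 0 ≤ c' i) ∧
      ∑ i ∈ s.erase i₀, c' i • v i = ∑ i ∈ s, c i • v i := by
  obtain ⟨g, hg, j, hjs, hj⟩ := not_linearIndepOn_finset_iff.mp hs
  -- rescaling the relation by `g j` makes its `j`-th coefficient positive
  set w : ι → ℝ := g j • g
  have hw : ∑ i ∈ s, w i • v i = 0 := by
    simp only [w, Pi.smul_apply, smul_eq_mul, mul_smul, ← smul_sum, hg, smul_zero]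
  obtain ⟨i₀, hi₀, hmin⟩ := (s.filter (0 < w ·)).exists_min_image (fun i => c i / w i)
    ⟨j, mem_filter.mpr ⟨hjs, by simpa [w] using mul_self_pos.mpr hj⟩⟩
  obtain ⟨hi₀s, hwi₀⟩ := mem_filter.mp hi₀
  set θ := c i₀ / w i₀
  have hθ : 0 ≤ θ := div_nonneg (hc i₀ hi₀s) hwi₀.le
  refine ⟨i₀, hi₀s, fun i => c i - θ * w i, fun i hi => ?_, ?_⟩
  · rcases lt_or_ge 0 (w i) with hwi | hwi
    · have := hmin i (mem_filter.mpr ⟨hi, hwi⟩)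
      rw [le_div_iff₀ hwi] at this
      linarith
    · nlinarith [hc i hi]
  · rw [sum_erase _ (by simp [θ, hwi₀.ne'])]
    simp only [sub_smul, sum_sub_distrib, mul_smul, ← smul_sum, hw, smul_zero, sub_zero]

lemma exists_linearIndepOn_nonneg_sum_eq [DecidableEq ι] (s : Finset ι) (c : ι → ℝ)
    (hc : ∀ i ∈ s, 0 ≤ c i) :
    ∃ t ⊆ s, LinearIndepOn ℝ v t ∧ ∃ c' : ι → ℝ, (∀ i ∈ t, 0 ≤ c' i) ∧
      ∑ i ∈ t, c' i • v i = ∑ i ∈ s, c i • v i := by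
  induction s using Finset.strongInduction generalizing c with
  | H s ih =>
  by_cases hs : LinearIndepOn ℝ v s
  · exact ⟨s, subset_rfl, hs, c, hc, rfl⟩
  obtain ⟨i₀, hi₀, c', hc', hsum⟩ := exists_nonneg_sum_erase_eq_of_not_linearIndepOn hc hs
  obtain ⟨t, hts, ht, c'', hc'', hsum'⟩ := ih _ (erase_ssubset hi₀) c'
    fun i hi => hc' i (mem_of_mem_erase hi)
  exact ⟨t, hts.trans (erase_subset _ _), ht, c'', hc'', hsum'.trans hsum⟩

lemma PointedCone.mem_hull_range_iff [Fintype ι] {x : E} :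
    x ∈ PointedCone.hull ℝ (Set.range v) ↔ ∃ c : ι → ℝ, (∀ i, 0 ≤ c i) ∧ ∑ i, c i • v i = x := by
  rw [PointedCone.hull, Submodule.mem_span_range_iff_exists_fun]
  constructor
  · rintro ⟨c, rfl⟩
    exact ⟨fun i => c i, fun i => (c i).2, rfl⟩
  · rintro ⟨c, hc, rfl⟩
    exact ⟨fun i => ⟨c i, hc i⟩, rfl⟩

end ConicHull

lemma PointedCone.isClosed_hull_range {ι E : Type*} [Fintype ι] [NormedAddCommGroup E]
    [NormedSpace ℝ E] [FiniteDimensional ℝ E] (v : ι → E) :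
    IsClosed (PointedCone.hull ℝ (Set.range v) : Set E) := by
  classical
  -- by conic Carathéodory the cone is the finite union of the images of closed orthants under
  -- the injective maps `c ↦ ∑ i ∈ t, c i • v i`, `t` linearly independent
  have hpiece (t : Finset ι) (ht : LinearIndepOn ℝ v t) :
      IsClosed (Fintype.linearCombination ℝ (fun i : (t : Set ι) => v i) '' Set.Ici 0) :=
    (LinearMap.isClosedEmbedding_of_injective (LinearMap.ker_eq_bot.mpr
      ht.fintypeLinearCombination_injective)).isClosedMap _ isClosed_Ici
  convert isClosed_iUnion_of_finite fun t : Finset ι => isClosed_iUnion_of_finite (hpiece t)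
    using 1
  refine Set.Subset.antisymm (fun x hx => ?_) ?_
  · obtain ⟨c, hc, rfl⟩ := PointedCone.mem_hull_range_iff.mp hx
    obtain ⟨t, -, ht, c', hc', hsum⟩ :=
      exists_linearIndepOn_nonneg_sum_eq (v := v) univ c fun i _ => hc i
    refine Set.mem_iUnion₂.mpr ⟨t, ht, fun i => c' i, fun i => hc' i i.2, ?_⟩
    rw [Fintype.linearCombination_apply, ← hsum]
    exact sum_coe_sort t (fun i => c' i • v i)
  · simp only [Set.iUnion_subset_iff, Set.image_subset_iff]
    intro t _ c hc
    rw [Set.mem_preimage, Fintype.linearCombination_apply]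
    exact Submodule.sum_mem _ fun i _ =>
      PointedCone.smul_mem _ (hc i) (PointedCone.subset_hull ⟨i, rfl⟩)

lemma exists_inner_add_mul_eq {E : Type*} [NormedAddCommGroup E] [InnerProductSpace ℝ E]
    [CompleteSpace E] (f : StrongDual ℝ (E × ℝ)) :
    ∃ (ζ : E) (ρ : ℝ), ∀ x r, f (x, r) = ⟪ζ, x⟫ + r * ρ := by
  refine ⟨(InnerProductSpace.toDual ℝ E).symm (f.comp (.inl ℝ E ℝ)), f (0, 1), fun x r => ?_⟩
  rw [InnerProductSpace.toDual_symm_apply, ← smul_eq_mul, ← map_smul,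
    ContinuousLinearMap.comp_apply, ← map_add]
  simp

section WorstCaseDuality

variable {E ι : Type*} [NormedAddCommGroup E] [InnerProductSpace ℝ E]
  {C : ι → E} {e : ι → ℝ} {a : E} {lam t : ℝ}

lemma inner_sub_mul_norm_le_of_dual_feasible [Fintype ι] {γ : ι → ℝ} (hγ : ∀ j, 0 ≤ γ j)
    (hobj : ∑ j, γ j * e j ≤ t) (hnorm : ‖∑ j, γ j • C j - a‖ ≤ lam) {ζ : E}
    (hζ : ∀ j, ⟪C j, ζ⟫ ≤ e j) : ⟪a, ζ⟫ - lam * ‖ζ‖ ≤ t := by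
  set g := ∑ j, γ j • C j
  have hg : ⟪g, ζ⟫ ≤ ∑ j, γ j * e j := by
    simp only [g, sum_inner, real_inner_smul_left]
    exact sum_le_sum fun j _ => mul_le_mul_of_nonneg_left (hζ j) (hγ j)
  calc ⟪a, ζ⟫ - lam * ‖ζ‖ = ⟪g, ζ⟫ - ⟪g - a, ζ⟫ - lam * ‖ζ‖ := by rw [inner_sub_left]; ring
    _ ≤ ∑ j, γ j * e j + ‖g - a‖ * ‖ζ‖ - lam * ‖ζ‖ := by
      linarith [neg_le_of_abs_le (abs_real_inner_le_norm (g - a) ζ)]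
    _ ≤ t := by nlinarith [norm_nonneg ζ]

lemma inner_sub_mul_norm_le_mul_of_inner_le_mul (he : ∀ j, 0 ≤ e j)
    (h : ∀ ζ, (∀ j, ⟪C j, ζ⟫ ≤ e j) → ⟪a, ζ⟫ - lam * ‖ζ‖ ≤ t) {ρ : ℝ} (hρ : 0 ≤ ρ) {ζ : E}
    (hζ : ∀ j, ⟪C j, ζ⟫ ≤ ρ * e j) : ⟪a, ζ⟫ - lam * ‖ζ‖ ≤ ρ * t := by
  have hscaled : ∀ σ > ρ, ⟪a, ζ⟫ - lam * ‖ζ‖ ≤ σ * t := by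
    intro σ hσ
    have hσ0 : 0 < σ := hρ.trans_lt hσ
    have := h (σ⁻¹ • ζ) fun j => by
      rw [real_inner_smul_right, inv_mul_le_iff₀ hσ0]
      nlinarith [hζ j, he j]
    rw [real_inner_smul_right, norm_smul, Real.norm_of_nonneg (inv_nonneg.2 hσ0.le)] at this
    rw [← inv_mul_le_iff₀ hσ0]
    linarith
  have hlim : Tendsto (fun σ => σ * t) (𝓝[>] ρ) (𝓝 (ρ * t)) :=
    ((continuous_mul_const t).tendsto ρ).mono_left nhdsWithin_le_nhds
  exact ge_of_tendsto hlim (eventually_nhdsWithin_of_forall hscaled)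

lemma exists_mem_closedBall_inner_eq_mul_norm (ζ : E) {r : ℝ} (hr : 0 ≤ r) :
    ∃ u ∈ Metric.closedBall (0 : E) r, ⟪ζ, u⟫ = r * ‖ζ‖ := by
  rcases eq_or_ne ζ 0 with rfl | hζ
  · exact ⟨0, by simpa using hr, by simp⟩
  have hζ' : ‖ζ‖ ≠ 0 := norm_ne_zero_iff.2 hζ
  refine ⟨(r * ‖ζ‖⁻¹) • ζ, ?_, ?_⟩
  · rw [mem_closedBall_zero_iff, norm_smul, Real.norm_of_nonneg (by positivity), mul_assoc,
      inv_mul_cancel₀ hζ', mul_one]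
  · rw [real_inner_smul_right, real_inner_self_eq_norm_sq]
    field_simp

theorem exists_dual_feasible_of_forall_inner_sub_le [Fintype ι] [FiniteDimensional ℝ E]
    (he : ∀ j, 0 ≤ e j) (hlam : 0 ≤ lam)
    (h : ∀ ζ, (∀ j, ⟪C j, ζ⟫ ≤ e j) → ⟪a, ζ⟫ - lam * ‖ζ‖ ≤ t) :
    ∃ γ : ι → ℝ, (∀ j, 0 ≤ γ j) ∧ ∑ j, γ j * e j ≤ t ∧ ‖∑ j, γ j • C j - a‖ ≤ lam := by
  by_contra! hγ
  let v : Option ι → E × ℝ := fun o => o.elim (0, 1) fun j => (C j, e j)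
  let K : ProperCone ℝ (E × ℝ) :=
    ⟨PointedCone.hull ℝ (Set.range v), PointedCone.isClosed_hull_range v⟩
  let B : Set (E × ℝ) := (fun x => (a, t) + x) '' (LinearMap.inl ℝ E ℝ '' Metric.closedBall 0 lam)
  have hBconvex : Convex ℝ B := ((convex_closedBall 0 lam).linear_image _).translate _
  have hBcompact : IsCompact B := ((isCompact_closedBall 0 lam).image
    (LinearMap.inl ℝ E ℝ).continuous_of_finiteDimensional).image (by fun_prop)
  have hdisj : Disjoint B K := by
    rw [Set.disjoint_left]
    rintro _ ⟨_, ⟨u, hu, rfl⟩, rfl⟩ hK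
    obtain ⟨c, hc, hsum⟩ := PointedCone.mem_hull_range_iff.mp hK
    simp only [v, Fintype.sum_option, Option.elim, Prod.smul_mk, smul_eq_mul, mul_one, smul_zero,
      Prod.ext_iff, Prod.fst_add, Prod.snd_add, Prod.fst_sum, Prod.snd_sum, LinearMap.inl_apply,
      zero_add] at hsum
    refine (hγ (fun j => c (some j)) (fun j => hc _) (by linarith [hc none])).not_ge ?_
    rw [hsum.1, add_sub_cancel_left]
    simpa using hu
  obtain ⟨f, hfK, hfB⟩ := K.hyperplane_separation hBconvex hBcompact hdisj
  obtain ⟨ζ, ρ, hf⟩ := exists_inner_add_mul_eq f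
  have hρ : 0 ≤ ρ := by simpa [hf, v] using hfK (v none) (PointedCone.subset_hull ⟨none, rfl⟩)
  have hC : ∀ j, ⟪C j, -ζ⟫ ≤ ρ * e j := fun j => by
    have := hfK (v (some j)) (PointedCone.subset_hull ⟨some j, rfl⟩)
    simp only [v, Option.elim, hf] at this
    rw [inner_neg_right, real_inner_comm]
    linarith
  have hball : ⟪ζ, a⟫ + lam * ‖ζ‖ + t * ρ < 0 := by
    obtain ⟨u, hu, hζu⟩ := exists_mem_closedBall_inner_eq_mul_norm ζ hlam
    simpa only [LinearMap.inl_apply, Prod.mk_add_mk, add_zero, hf, inner_add_right, hζu]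
      using hfB _ ⟨_, ⟨u, hu, rfl⟩, rfl⟩
  have := inner_sub_mul_norm_le_mul_of_inner_le_mul he h hρ hC
  rw [inner_neg_right, norm_neg, real_inner_comm] at this
  linarith

theorem forall_inner_sub_mul_norm_le_iff [Fintype ι] [FiniteDimensional ℝ E]
    (he : ∀ j, 0 ≤ e j) (hlam : 0 ≤ lam) :
    (∀ ζ, (∀ j, ⟪C j, ζ⟫ ≤ e j) → ⟪a, ζ⟫ - lam * ‖ζ‖ ≤ t) ↔
      ∃ γ : ι → ℝ, (∀ j, 0 ≤ γ j) ∧ ∑ j, γ j * e j ≤ t ∧ ‖∑ j, γ j • C j - a‖ ≤ lam :=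
  ⟨exists_dual_feasible_of_forall_inner_sub_le he hlam,
    fun ⟨_, hγ, hobj, hnorm⟩ _ hζ => inner_sub_mul_norm_le_of_dual_feasible hγ hobj hnorm hζ⟩

end WorstCaseDuality

/-- dual reformulation of the worst-case constraint over a polytopic
support set. Let `Ξ = {ξ : Cξ ≤ d}` be a nonempty polytope (with rows `C j` of the
matrix `C`), let `ξhat ∈ Ξ` be a sample point, `λ ≥ 0` and `s ∈ ℝ`. Then
`sup_{ξ ∈ Ξ} (aᵀξ + b − λ‖ξ − ξhat‖) ≤ s` if and only if there exists `γ ≥ 0` with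
`b + aᵀξhat + γᵀ(d − Cξhat) ≤ s` and `‖Cᵀγ − a‖ ≤ λ`. -/
theorem polytopic_worst_case_constraint_duality {p m : ℕ}
    (C : Fin m → EuclideanSpace ℝ (Fin p)) (d : Fin m → ℝ)
    (a : EuclideanSpace ℝ (Fin p)) (b : ℝ) (lam : ℝ) (hlam : 0 ≤ lam) (s : ℝ)
    (ξhat : EuclideanSpace ℝ (Fin p)) (hξhat : ∀ j, ⟪C j, ξhat⟫ ≤ d j) :
    (∀ ξ : EuclideanSpace ℝ (Fin p), (∀ j, ⟪C j, ξ⟫ ≤ d j) →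
        ⟪a, ξ⟫ + b - lam * ‖ξ - ξhat‖ ≤ s) ↔
      (∃ γ : Fin m → ℝ, (∀ j, 0 ≤ γ j) ∧
        b + ⟪a, ξhat⟫ + ∑ j, γ j * (d j - ⟪C j, ξhat⟫) ≤ s ∧
        ‖(∑ j, γ j • C j) - a‖ ≤ lam) := by
  have hrecenter : (∀ ξ : EuclideanSpace ℝ (Fin p), (∀ j, ⟪C j, ξ⟫ ≤ d j) →
        ⟪a, ξ⟫ + b - lam * ‖ξ - ξhat‖ ≤ s) ↔
      ∀ ζ, (∀ j, ⟪C j, ζ⟫ ≤ d j - ⟪C j, ξhat⟫) →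
        ⟪a, ζ⟫ - lam * ‖ζ‖ ≤ s - b - ⟪a, ξhat⟫ := by
    refine (Equiv.subRight ξhat).forall_congr fun ξ => imp_congr ?_ ?_
    · exact forall_congr' fun j => by
        rw [Equiv.subRight_apply, inner_sub_right, sub_le_sub_iff_right]
    · rw [Equiv.subRight_apply, inner_sub_right]
      constructor <;> intro h <;> linarith
  rw [hrecenter, forall_inner_sub_mul_norm_le_iff (fun j => sub_nonneg.2 (hξhat j)) hlam]
  refine exists_congr fun γ => and_congr_right' (and_congr_left' ?_)
  constructor <;> intro h <;> linarith
end
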